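/- Under Assumption 2.5 and exponential stability of the evolution family (‖U(t,s,ω)‖_{𝓛(X)} ≤ C_U e^{−λ(t−s)}, λ > 0), for every ω ∈ Ω: (i) ‖U(0,−a,ω)ω_{−a}‖_X → 0 as a → ∞; (ii) the integral ∫_{−∞}^0 U(0,r,ω)A(θ_rω)ω_r dr converges absolutely in X; consequently the limit lim_{a→∞} ( −U(0,−a,ω)ω_{−a} + ∫_{−a}^0 U(0,r,ω)A(θ_rω)ω_r dr ) exists in X and defines Z(ω). -/

import Mathlib

open MeasureTheory Filter

/-!
Exponential stability beats the at most linear growth of the path at `-∞`: this gives (i) and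
the integrability of `r ↦ U(0,r)A(θ_r ω) ω_r` on `(-∞,-1]`, where the smoothing estimate bounds
it by a multiple of `e^{λr}`. Near `r = 0` the singularity `(-r)⁻¹` of the smoothing estimate is
compensated by the Hölder bound `‖ω_r‖ ≤ c (-r)^{1/4}` (recall `ω_0 = 0`), leaving the integrable
`(-r)^{-3/4}`. The limit is then `∫_{-∞}^0 U(0,r)A(θ_r ω) ω_r dr`.
-/

open Set Real Topology

section WeightedIntegrability

variable {X : Type*} [NormedAddCommGroup X]

lemma exists_norm_le_mul_neg_of_sublinear {p : ℝ → X} (hp : Continuous p) {T₀ ε : ℝ}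
    (hT₀ : ∀ t, T₀ ≤ |t| → ‖p t‖ ≤ ε * |t|) : ∃ K, ∀ r ≤ -1, ‖p r‖ ≤ K * -r := by
  obtain ⟨B, hB⟩ := isCompact_Icc.exists_bound_of_continuousOn (s := Icc (-T₀) (-1))
    hp.continuousOn
  refine ⟨max B ε, fun r hr => ?_⟩
  rcases le_or_gt (-T₀) r with hrT | hrT
  · have hpB : ‖p r‖ ≤ B := hB r ⟨hrT, hr⟩
    calc ‖p r‖ ≤ max B ε := hpB.trans (le_max_left _ _)
      _ ≤ max B ε * -r :=
        le_mul_of_one_le_right ((norm_nonneg _).trans (hpB.trans (le_max_left _ _))) (by linarith)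
  · calc ‖p r‖ ≤ ε * -r := by simpa [abs_of_neg (by linarith : r < 0)] using hT₀ r (by
          rw [abs_of_neg (by linarith : r < 0)]; linarith)
      _ ≤ max B ε * -r := mul_le_mul_of_nonneg_right (le_max_right B ε) (by linarith)

lemma integrableOn_Iic_zero_of_norm_le {f : ℝ → X} (hf : ContinuousOn f (Iio 0))
    {lam γ M N : ℝ} (hlam : 0 < lam) (hγ : 0 < γ)
    (hfar : ∀ r ≤ -1, ‖f r‖ ≤ M * exp (lam * r))
    (hnear : ∀ r ∈ Ioo (-1 : ℝ) 0, ‖f r‖ ≤ N * (-r) ^ (γ - 1)) :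
    IntegrableOn f (Iic 0) := by
  have hfar_int : IntegrableOn f (Iic (-1)) := by
    refine Integrable.mono' ((integrableOn_exp_mul_Iic hlam (-1)).const_mul M)
      ((hf.mono (Iic_subset_Iio.2 (by norm_num))).aestronglyMeasurable measurableSet_Iic) ?_
    exact (ae_restrict_iff' measurableSet_Iic).2 (Eventually.of_forall hfar)
  have hnear_int : IntegrableOn f (Ioo (-1) 0) := by
    have hrpow : IntegrableOn (fun r : ℝ => (-r) ^ (γ - 1)) (Ioc (-1) 0) := by
      simpa using ((IntervalIntegrable.iff_comp_neg).mp
        (intervalIntegral.intervalIntegrable_rpow' (a := 1) (b := 0)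
          (by linarith : -1 < γ - 1))).1
    refine Integrable.mono' ((hrpow.mono_set Ioo_subset_Ioc_self).const_mul N)
      ((hf.mono fun r hr => hr.2).aestronglyMeasurable measurableSet_Ioo) ?_
    exact (ae_restrict_iff' measurableSet_Ioo).2 (Eventually.of_forall hnear)
  rw [integrableOn_Iic_iff_integrableOn_Iio, ← Iic_union_Ioo_eq_Iio (by norm_num : (-1 : ℝ) < 0)]
  exact hfar_int.union hnear_int

lemma integrableOn_Iic_zero_of_smoothing {f p : ℝ → X} (hf : ContinuousOn f (Iio 0))
    {C lam c γ K : ℝ} (hC : 0 ≤ C) (hlam : 0 < lam) (hγ : 0 < γ)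
    (hsmooth : ∀ r < 0, ‖f r‖ ≤ C * (exp (lam * r) / -r) * ‖p r‖)
    (hnear : ∀ r ∈ Ioo (-1 : ℝ) 0, ‖p r‖ ≤ c * (-r) ^ γ)
    (hfar : ∀ r ≤ -1, ‖p r‖ ≤ K * -r) :
    IntegrableOn f (Iic 0) := by
  refine integrableOn_Iic_zero_of_norm_le hf (M := C * K) (N := C * c) hlam hγ
    (fun r hr => ?_) (fun r hr => ?_)
  · have hr' : r ≠ 0 := by linarith
    calc ‖f r‖ ≤ C * (exp (lam * r) / -r) * ‖p r‖ := hsmooth r (by linarith)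
      _ ≤ C * (exp (lam * r) / -r) * (K * -r) :=
        mul_le_mul_of_nonneg_left (hfar r hr)
          (mul_nonneg hC (div_nonneg (exp_pos _).le (by linarith)))
      _ = C * K * exp (lam * r) := by field_simp
  · have hr' : 0 < -r := by linarith [hr.2]
    have hexp : exp (lam * r) ≤ 1 := exp_le_one_iff.2 (by nlinarith [hr.2])
    calc ‖f r‖ ≤ C * (exp (lam * r) / -r) * ‖p r‖ := hsmooth r hr.2
      _ ≤ C * (1 / -r) * (c * (-r) ^ γ) := by
        gcongr
        exact hnear r hr
      _ = C * c * (-r) ^ (γ - 1) := by rw [rpow_sub_one hr'.ne']; ring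

end WeightedIntegrability

lemma tendsto_norm_apply_of_exp_decay {𝕜 E F : Type*} [NontriviallyNormedField 𝕜]
    [SeminormedAddCommGroup E] [NormedSpace 𝕜 E] [SeminormedAddCommGroup F] [NormedSpace 𝕜 F]
    (T : ℝ → E →L[𝕜] F) (x : ℝ → E) {C lam K : ℝ} (hlam : 0 < lam)
    (hT : ∀ᶠ a in atTop, ‖T a‖ ≤ C * exp (-lam * a)) (hx : ∀ᶠ a in atTop, ‖x a‖ ≤ K * a) :
    Tendsto (fun a => ‖T a (x a)‖) atTop (𝓝 0) := by
  have hbound : Tendsto (fun a : ℝ => C * K * (a ^ (1 : ℝ) * exp (-lam * a))) atTop (𝓝 0) := by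
    simpa using (tendsto_rpow_mul_exp_neg_mul_atTop_nhds_zero 1 lam hlam).const_mul (C * K)
  refine squeeze_zero' (Eventually.of_forall fun a => norm_nonneg _) ?_ hbound
  filter_upwards [hT, hx] with a hTa hxa
  calc ‖T a (x a)‖ ≤ ‖T a‖ * ‖x a‖ := (T a).le_opNorm _
    _ ≤ C * exp (-lam * a) * (K * a) :=
      mul_le_mul hTa hxa (norm_nonneg _) ((norm_nonneg _).trans hTa)
    _ = C * K * (a ^ (1 : ℝ) * exp (-lam * a)) := by rw [rpow_one]; ring

lemma tendsto_setIntegral_Ioc_neg_atTop {E : Type*} [NormedAddCommGroup E] [NormedSpace ℝ E]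
    {f : ℝ → E} {b : ℝ} (hf : IntegrableOn f (Iic b)) :
    Tendsto (fun a => ∫ r in Ioc (-a) b, f r) atTop (𝓝 (∫ r in Iic b, f r)) := by
  refine (intervalIntegral_tendsto_integral_Iic b hf tendsto_neg_atTop_atBot).congr' ?_
  filter_upwards [eventually_ge_atTop (-b)] with a ha
  exact intervalIntegral.integral_of_le (by linarith)

theorem statement1_general
    {Ω : Type*} {X : Type*} [NormedAddCommGroup X] [NormedSpace ℝ X]
    (path : Ω → ℝ → X)
    (hpath0 : ∀ ω, path ω 0 = 0)
    (hpathcont : ∀ ω, Continuous (path ω))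
    -- sublinear growth of the paths
    (hgrowth : ∀ ω, ∀ ε : ℝ, 0 < ε → ∃ T₀ : ℝ, 0 < T₀ ∧
      ∀ t : ℝ, T₀ ≤ |t| → ‖path ω t‖ ≤ ε * |t|)
    -- local Hölder continuity of the paths, for every exponent `γ' ∈ (0,1/2)`
    (hHolder : ∀ ω, ∀ γ' ∈ Set.Ioo (0 : ℝ) (1/2), ∀ a b : ℝ, a ≤ b →
      ∃ c : ℝ, ∀ x ∈ Set.Icc a b, ∀ y ∈ Set.Icc a b,
        ‖path ω x - path ω y‖ ≤ c * |x - y| ^ γ')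
    -- the parabolic evolution family and the extended operators `U(t,s,ω) A(θ_s ω)`
    (U : ℝ → ℝ → Ω → X →L[ℝ] X)
    (UA : ℝ → ℝ → Ω → X →L[ℝ] X)
    (hUAcont : ∀ ω, ∀ t : ℝ, ContinuousOn (fun r : ℝ => UA t r ω (path ω r)) (Set.Iio t))
    -- exponential stability
    (C_U lam : ℝ) (hlam : 0 < lam)
    (hstable : ∀ t s : ℝ, s ≤ t → ∀ ω, ‖U t s ω‖ ≤ C_U * Real.exp (-lam * (t - s)))
    -- smoothing estimate for the extension of `U(t,s,ω) A(θ_s ω)` to `X`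
    (C₁ : ℝ) (hC₁ : 0 < C₁)
    (hsmooth : ∀ t s : ℝ, s < t → ∀ ω, ∀ x : X,
      ‖UA t s ω x‖ ≤ C₁ * (Real.exp (-lam * (t - s)) / (t - s)) * ‖x‖)
    (ω : Ω) :
    -- (i)
    Tendsto (fun a : ℝ => ‖U 0 (-a) ω (path ω (-a))‖) atTop (nhds 0) ∧
    -- (ii) absolute convergence of the integral on `(-∞,0]`
    IntegrableOn (fun r : ℝ => UA 0 r ω (path ω r)) (Set.Iic 0) ∧
    -- consequently the limit exists in `X` and defines `Z(ω)`
    ∃ Zω : X,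
      Tendsto
        (fun a : ℝ =>
          -(U 0 (-a) ω (path ω (-a))) + ∫ r in Set.Ioc (-a) (0 : ℝ), UA 0 r ω (path ω r))
        atTop (nhds Zω) := by
  obtain ⟨T₀, -, hT₀⟩ := hgrowth ω 1 one_pos
  obtain ⟨K, hK⟩ := exists_norm_le_mul_neg_of_sublinear (hpathcont ω) hT₀
  obtain ⟨c, hc⟩ := hHolder ω (1 / 4) ⟨by norm_num, by norm_num⟩ (-1) 0 (by norm_num)
  have decay : Tendsto (fun a : ℝ => ‖U 0 (-a) ω (path ω (-a))‖) atTop (𝓝 0) :=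
    tendsto_norm_apply_of_exp_decay (fun a => U 0 (-a) ω) (fun a => path ω (-a)) hlam
      ((eventually_ge_atTop 0).mono fun a ha => by simpa using hstable 0 (-a) (by linarith) ω)
      ((eventually_ge_atTop 1).mono fun a ha => by simpa using hK (-a) (by linarith))
  have integrable : IntegrableOn (fun r : ℝ => UA 0 r ω (path ω r)) (Iic 0) :=
    integrableOn_Iic_zero_of_smoothing (hUAcont ω 0) hC₁.le hlam (by norm_num : (0 : ℝ) < 1 / 4)
      (fun r hr => by simpa only [zero_sub, neg_mul_neg] using hsmooth 0 r hr ω (path ω r))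
      (fun r hr => by
        simpa [hpath0, abs_of_neg hr.2] using hc r ⟨hr.1.le, hr.2.le⟩ 0 ⟨by norm_num, le_rfl⟩)
      hK
  refine ⟨decay, integrable, ∫ r in Iic 0, UA 0 r ω (path ω r), ?_⟩
  simpa using (tendsto_zero_iff_norm_tendsto_zero.2 decay).neg.add
    (tendsto_setIntegral_Ioc_neg_atTop integrable)

/-- Under Assumption 2.5 (here abstracted by the parabolic evolution family
`U(t,s,ω)` together with the extended operators `UA t s ω = U(t,s,ω) A(θ_s ω)` and the
smoothing estimate `‖U(t,s,ω)A(θ_s ω)x‖ ≤ C̃₁ e^{-λ(t-s)}(t-s)^{-1}‖x‖`) and exponential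
stability `‖U(t,s,ω)‖ ≤ C_U e^{-λ(t-s)}`, for every `ω ∈ Ω`:
(i)  `‖U(0,-a,ω) ω_{-a}‖ → 0` as `a → ∞`;
(ii) the integral `∫_{-∞}^0 U(0,r,ω)A(θ_r ω) ω_r dr` converges absolutely in `X`;
consequently the limit
`lim_{a→∞} ( -U(0,-a,ω) ω_{-a} + ∫_{-a}^0 U(0,r,ω)A(θ_r ω) ω_r dr )` exists in `X`
(and defines `Z(ω)`). -/
theorem statement1
    {Ω : Type*} {X : Type*} [NormedAddCommGroup X] [NormedSpace ℝ X] [CompleteSpace X]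
    -- the Wiener shift on the canonical set of two-sided Brownian paths
    (θ : ℝ → Ω → Ω)
    (path : Ω → ℝ → X)
    (hpath0 : ∀ ω, path ω 0 = 0)
    (hpathcont : ∀ ω, Continuous (path ω))
    (hshift : ∀ s t : ℝ, ∀ ω, path (θ s ω) t = path ω (t + s) - path ω s)
    -- sublinear growth of the paths
    (hgrowth : ∀ ω, ∀ ε : ℝ, 0 < ε → ∃ T₀ : ℝ, 0 < T₀ ∧
      ∀ t : ℝ, T₀ ≤ |t| → ‖path ω t‖ ≤ ε * |t|)
    -- local Hölder continuity of the paths, for every exponent `γ' ∈ (0,1/2)`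
    (hHolder : ∀ ω, ∀ γ' ∈ Set.Ioo (0 : ℝ) (1/2), ∀ a b : ℝ, a ≤ b →
      ∃ c : ℝ, ∀ x ∈ Set.Icc a b, ∀ y ∈ Set.Icc a b,
        ‖path ω x - path ω y‖ ≤ c * |x - y| ^ γ')
    -- the parabolic evolution family and the extended operators `U(t,s,ω) A(θ_s ω)`
    (U : ℝ → ℝ → Ω → X →L[ℝ] X)
    (UA : ℝ → ℝ → Ω → X →L[ℝ] X)
    (hUid : ∀ t : ℝ, ∀ ω, U t t ω = ContinuousLinearMap.id ℝ X)
    (hUcomp : ∀ t s r : ℝ, r ≤ s → s ≤ t → ∀ ω,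
      (U t s ω).comp (U s r ω) = U t r ω)
    (hUAcont : ∀ ω, ∀ t : ℝ, ContinuousOn (fun r : ℝ => UA t r ω (path ω r)) (Set.Iio t))
    -- exponential stability
    (C_U lam : ℝ) (hCU : 0 < C_U) (hlam : 0 < lam)
    (hstable : ∀ t s : ℝ, s ≤ t → ∀ ω, ‖U t s ω‖ ≤ C_U * Real.exp (-lam * (t - s)))
    -- smoothing estimate for the extension of `U(t,s,ω) A(θ_s ω)` to `X`
    (C₁ : ℝ) (hC₁ : 0 < C₁)
    (hsmooth : ∀ t s : ℝ, s < t → ∀ ω, ∀ x : X,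
      ‖UA t s ω x‖ ≤ C₁ * (Real.exp (-lam * (t - s)) / (t - s)) * ‖x‖)
    (ω : Ω) :
    -- (i)
    Tendsto (fun a : ℝ => ‖U 0 (-a) ω (path ω (-a))‖) atTop (nhds 0) ∧
    -- (ii) absolute convergence of the integral on `(-∞,0]`
    IntegrableOn (fun r : ℝ => UA 0 r ω (path ω r)) (Set.Iic 0) ∧
    -- consequently the limit exists in `X` and defines `Z(ω)`
    ∃ Zω : X,
      Tendsto
        (fun a : ℝ =>
          -(U 0 (-a) ω (path ω (-a))) + ∫ r in Set.Ioc (-a) (0 : ℝ), UA 0 r ω (path ω r))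
        atTop (nhds Zω) :=
  statement1_general path hpath0 hpathcont hgrowth hHolder U UA hUAcont C_U lam hlam hstable C₁ hC₁
    hsmooth ω
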